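/- Let A be a commutative ring, 𝔞 a finitely generated ideal, M an A-module with 𝔞-adic completion M̂, and Z a set. For every k ≥ 0, the canonical homomorphism A/𝔞^{k+1} ⊗_A F_dec(Z, M̂) → F_fin(Z, A/𝔞^{k+1} ⊗_A M) is bijective, where F_dec(Z, M̂) is the module of 𝔞-adically decaying functions Z → M̂ and F_fin denotes finitely supported functions. -/

import Mathlib

/-- The submodule of finitely supported functions `F_fin(Z, N) ⊆ F(Z, N)`. -/
def finSuppFns (A : Type*) [CommRing A] (Z : Type*) (N : Type*)
    [AddCommGroup N] [Module A N] : Submodule A (Z → N) where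
  carrier := { g | (Function.support g).Finite }
  add_mem' := fun hf hg => Set.Finite.subset (hf.union hg) (Function.support_add _ _)
  zero_mem' := by simp
  smul_mem' := fun r g hg => hg.subset fun z hz => by
    simp only [Function.mem_support] at hz ⊢
    intro h
    apply hz
    show r • g z = 0
    rw [h, smul_zero]

/-- The submodule `F_dec(Z, M̂)` of `𝔞`-adically decaying functions `Z → M̂`, where
`M̂` is the `𝔞`-adic completion of `M`: functions `f` such that for every `k` the set
`{z | f z ∉ 𝔞^{k+1}·M̂}` is finite. -/
noncomputable def decayingFns {A : Type*} [CommRing A] (a : Ideal A) (Z : Type*) (M : Type*)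
    [AddCommGroup M] [Module A M] : Submodule A (Z → AdicCompletion a M) where
  carrier := { f | ∀ k : ℕ,
    { z | f z ∉ (a ^ (k + 1) • ⊤ : Submodule A (AdicCompletion a M)) }.Finite }
  add_mem' := fun {f g} hf hg k => by
    refine ((hf k).union (hg k)).subset fun z hz => ?_
    by_contra h
    simp only [Set.mem_union, Set.mem_setOf_eq, not_or, not_not] at h
    exact hz (Submodule.add_mem _ h.1 h.2)
  zero_mem' := fun k =>
    Set.finite_empty.subset fun z hz => (hz (Submodule.zero_mem _)).elim
  smul_mem' := fun r f hf k => by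
    refine (hf k).subset fun z hz => ?_
    intro h
    exact hz (Submodule.smul_mem _ r h)

/-- The canonical map `F_dec(Z, M̂) → F(Z, M/𝔞^{k+1}M)`, post-composition with the
evaluation `M̂ → M/𝔞^{k+1}M`. -/
noncomputable def decayingEval {A : Type*} [CommRing A] (a : Ideal A) (Z : Type*) (M : Type*)
    [AddCommGroup M] [Module A M] (k : ℕ) :
    (↥(decayingFns a Z M)) →ₗ[A] (Z → M ⧸ (a ^ (k + 1) • ⊤ : Submodule A M)) where
  toFun f z := AdicCompletion.eval a M (k + 1) (f.1 z)
  map_add' f g := funext fun z => by simp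
  map_smul' r f := funext fun z => by simp

open AdicCompletion

/-!
The range statement only needs that `M → M/𝔞^{k+1}M` is surjective and sends `0` to `0`: lift a
finitely supported function pointwise, by zero off its support. For the kernel, `𝔞^{k+1}M̂` is the
kernel of the evaluation `M̂ → M/𝔞^{k+1}M` since `𝔞` is finitely generated. Fix generators
`t₁, …, tₙ` of `𝔞^{k+1}` and write each value `x z = ∑ tᵢ • mᵢ z`, choosing the coefficients as deep
in the `𝔞`-adic filtration as `x z` allows (`M̂` is Hausdorff). Then each `mᵢ` inherits the decay of
`x`, so `x = ∑ tᵢ • mᵢ` lies in `𝔞^{k+1} • F_dec(Z, M̂)`.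
-/

theorem Submodule.exists_sum_smul_of_mem_span_smul {R M : Type*} [CommSemiring R]
    [AddCommMonoid M] [Module R M] {S : Finset R} {N : Submodule R M} {x : M}
    (hx : x ∈ Ideal.span (S : Set R) • N) :
    ∃ m : R → M, (∀ r, m r ∈ N) ∧ x = ∑ r ∈ S, r • m r := by
  rw [← Submodule.coe_set_smul, Submodule.coe_span_smul, Submodule.mem_set_smul] at hx
  obtain ⟨c, hcS, rfl⟩ := hx
  refine ⟨fun r => c r, fun r => (c r).2, ?_⟩
  rw [Finsupp.sum_of_support_subset c hcS _ fun _ _ => smul_zero _, Submodule.coe_sum]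
  rfl

theorem IsHausdorff.exists_sum_smul_of_mem_span_smul_top {A M : Type*} [CommRing A]
    [AddCommGroup M] [Module A M] (a : Ideal A) [IsHausdorff a M] {S : Finset A} {x : M}
    (hx : x ∈ Ideal.span (S : Set A) • (⊤ : Submodule A M)) :
    ∃ m : A → M, x = ∑ r ∈ S, r • m r ∧
      ∀ j, x ∈ Ideal.span (S : Set A) • (a ^ j • ⊤ : Submodule A M) →
        ∀ r, m r ∈ a ^ j • (⊤ : Submodule A M) := by
  classical
  by_cases hx0 : x = 0
  · exact ⟨0, by simp [hx0], fun _ _ _ => Submodule.zero_mem _⟩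
  obtain ⟨n, hn⟩ : ∃ n, x ∉ (a ^ n • ⊤ : Submodule A M) := by
    by_contra! h
    exact hx0 (IsHausdorff.haus ‹_› x fun n => SModEq.zero.2 (h n))
  -- the coefficients are taken at the largest depth `J ≤ n` with `x ∈ span S • 𝔞^J M`
  set P := fun j => x ∈ Ideal.span (S : Set A) • (a ^ j • ⊤ : Submodule A M)
  have hP0 : P 0 := by simpa [P] using hx
  obtain ⟨m, hmJ, rfl⟩ :=
    Submodule.exists_sum_smul_of_mem_span_smul (Nat.findGreatest_spec (P := P) n.zero_le hP0)
  refine ⟨m, rfl, fun j hj r => Submodule.smul_mono_left (Ideal.pow_le_pow_right ?_) (hmJ r)⟩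
  refine Nat.le_findGreatest (not_lt.1 fun hnj => hn ?_) hj
  exact Submodule.smul_mono_left (Ideal.pow_le_pow_right hnj.le) (Submodule.smul_le_right hj)

section DecayingFunctions

variable {A : Type*} [CommRing A] (a : Ideal A) (Z M : Type*) [AddCommGroup M] [Module A M]

theorem range_decayingEval (k : ℕ) :
    LinearMap.range (decayingEval a Z M k) =
      finSuppFns A Z (M ⧸ (a ^ (k + 1) • ⊤ : Submodule A M)) := by
  refine le_antisymm ?_ fun g (hg : (Function.support g).Finite) => ?_
  · rintro _ ⟨f, rfl⟩
    exact (f.2 k).subset fun z hz hfz => hz (pow_smul_top_le_ker_eval (M := M) a (k + 1) hfz)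
  · have hlift : ∀ z, ∃ m : M, Submodule.Quotient.mk m = g z ∧ (g z = 0 → m = 0) := fun z => by
      by_cases hgz : g z = 0
      · exact ⟨0, by simp [hgz], fun _ => rfl⟩
      · obtain ⟨m, hm⟩ := Submodule.Quotient.mk_surjective _ (g z)
        exact ⟨m, hm, (absurd · hgz)⟩
    choose m hmg hm0 using hlift
    refine ⟨⟨fun z => of a M (m z), fun j => hg.subset fun z hz hgz => hz ?_⟩, funext fun z => ?_⟩
    · simp [hm0 z hgz]
    · exact (eval_of a M (k + 1) (m z)).trans (hmg z)

theorem ker_decayingEval (ha : a.FG) (k : ℕ) :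
    LinearMap.ker (decayingEval a Z M k) =
      (a ^ (k + 1)) • (⊤ : Submodule A (decayingFns a Z M)) := by
  refine le_antisymm (fun x hx => ?_) (Submodule.smul_le.2 fun r hr f _ => ?_)
  · obtain ⟨S, hS⟩ := ha.pow (n := k + 1)
    have hxS : ∀ z, x.1 z ∈ Ideal.span (S : Set A) • (⊤ : Submodule A (AdicCompletion a M)) :=
      fun z => by rw [hS, pow_smul_top_eq_ker_eval ha]; exact congrFun hx z
    choose m hxm hm using fun z => IsHausdorff.exists_sum_smul_of_mem_span_smul_top a (hxS z)
    have hdec : ∀ r, (fun z => m z r) ∈ decayingFns a Z M := fun r j =>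
      (x.2 (k + j + 1)).subset fun z hz hxz => hz <| hm z (j + 1) (by
        rwa [show k + j + 1 + 1 = k + 1 + (j + 1) by omega, pow_add, Submodule.mul_smul,
          ← hS] at hxz) r
    have hxsum : x = ∑ r ∈ S, r • (⟨fun z => m z r, hdec r⟩ : decayingFns a Z M) :=
      Subtype.ext (funext fun z => by simp [hxm z])
    rw [hxsum]
    exact Submodule.sum_mem _ fun r hr =>
      Submodule.smul_mem_smul (hS ▸ Ideal.subset_span hr) trivial
  · ext z
    exact pow_smul_top_le_ker_eval (M := M) a (k + 1) (Submodule.smul_mem_smul hr trivial)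

end DecayingFunctions

/-- For a finitely generated ideal `𝔞` and any `A`-module `M` with `𝔞`-adic completion
`M̂`, the canonical homomorphism `A/𝔞^{k+1} ⊗_A F_dec(Z, M̂) → F_fin(Z, A/𝔞^{k+1} ⊗_A M)`
is bijective; equivalently, the canonical map `F_dec(Z, M̂) → F(Z, M/𝔞^{k+1}M)` has
image exactly the finitely supported functions and kernel `𝔞^{k+1}·F_dec(Z, M̂)`. -/
theorem decaying_base_change_bijective {A : Type*} [CommRing A] (a : Ideal A) (ha : a.FG)
    (Z : Type*) (M : Type*) [AddCommGroup M] [Module A M] (k : ℕ) :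
    LinearMap.range (decayingEval a Z M k) =
      finSuppFns A Z (M ⧸ (a ^ (k + 1) • ⊤ : Submodule A M)) ∧
    LinearMap.ker (decayingEval a Z M k) =
      (a ^ (k + 1)) • (⊤ : Submodule A (↥(decayingFns a Z M))) :=
  ⟨range_decayingEval a Z M k, ker_decayingEval a Z M ha k⟩
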